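/- Let a ∈ ℝ, b > 0, and let m be a real number that is not a nonpositive integer. Then Ψ_n(a,b,m) ~ (n!)² · b^n · e^{a/b − m} · n^{m−1} / Γ(m) as n → ∞; that is, lim_{n→∞} Ψ_n(a,b,m) / ( (n!)² · b^n · n^{m−1} ) = e^{a/b − m} / Γ(m), where Γ is the Gamma function. -/

import Mathlib

/-!
Weight `σ ∈ S_n` by `a ^ (fixed points) * m ^ (nontrivial cycles) * b ^ (moved points)`; since
fixed and moved points add up to `n`, `Ψ_n(a,b,m) = bⁿ Ψ_n(a/b,1,m)`, so we may take `b = 1`.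
Writing `W_n` for the weighted count, inserting a new point into a permutation of `n`
points (as a fixed point, behind a moved point, or into a 2-cycle with a fixed point) gives
`W_{n+2} = (a+n+1) W_{n+1} + (m-a)(n+1) W_n`. This is the recurrence of the coefficients of
`exp((a-m)X) (1-X)^(-m)`, whence `W_n / n! = ∑_{i+j=n} (a-m)^i/i! · m(m+1)⋯(m+j-1)/j!`. By Euler's
limit formula `m(m+1)⋯(m+j-1)/j! ~ j^(m-1)/Γ(m)`, and Tannery's theorem turns this into
`W_n / n! ~ e^(a-m) n^(m-1) / Γ(m)`.
-/

open scoped BigOperators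

/-- Number of fixed points of a permutation, i.e. `c₁(σ)`. -/
def fixedPointCount {α : Type*} [DecidableEq α] [Fintype α] (σ : Equiv.Perm α) : ℕ :=
  (Finset.univ.filter fun i => σ i = i).card

/-- `Ψ_n(a,b,m) = n! ∑_{σ ∈ S_n} a^{c₁(σ)} ∏_{ℓ=2}^n (m b^ℓ)^{c_ℓ(σ)}`. -/
noncomputable def Psi (a b m : ℝ) (n : ℕ) : ℝ :=
  (n.factorial : ℝ) * ∑ σ : Equiv.Perm (Fin n),
    a ^ fixedPointCount σ *
      ∏ ℓ ∈ Finset.Icc 2 n, (m * b ^ ℓ) ^ (σ.cycleType.count ℓ)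

open Equiv Equiv.Perm Finset
open scoped Nat

namespace Equiv.Perm
variable {α : Type*} [DecidableEq α] [Fintype α]

theorem cycleType_swap_mul_of_apply_eq_self {g : Perm α} {x y : α} (hx : g x = x) (hy : g y = y)
    (hxy : x ≠ y) : (swap x y * g).cycleType = 2 ::ₘ g.cycleType := by
  have hdisj : (swap x y).Disjoint g := fun z ↦ by
    by_cases hz : z = x ∨ z = y
    · rcases hz with rfl | rfl <;> simp [hx, hy]
    · push Not at hz
      exact .inl (swap_apply_of_ne_of_ne hz.1 hz.2)
  rw [hdisj.cycleType_mul, (isCycle_swap hxy).cycleType, card_support_swap hxy]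
  rfl

theorem toList_eq_cons {g : Perm α} {y : α} (hy : g y ≠ y) : ∃ l, toList g y = y :: l := by
  obtain ⟨k, hk⟩ : ∃ k, #(g.cycleOf y).support = k + 1 :=
    Nat.exists_eq_add_one.2 (card_pos.2 (support_cycleOf_nonempty.2 hy))
  exact ⟨_, by rw [toList, hk]; rfl⟩

-- `swap x y` glues `x` in front of `y` in the cycle `toList g y`, which is disjoint from the rest.
theorem cycleType_swap_mul_of_apply_ne_self {g : Perm α} {x y : α} (hx : g x = x)
    (hy : g y ≠ y) : ∃ s, g.cycleType = #(g.cycleOf y).support ::ₘ s ∧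
      (swap x y * g).cycleType = (#(g.cycleOf y).support + 1) ::ₘ s := by
  set c := g.cycleOf y
  set ρ := g * c⁻¹
  have hρc : ρ.Disjoint c := disjoint_mul_inv_of_mem_cycleFactorsFinset
    (cycleOf_mem_cycleFactorsFinset_iff.2 (mem_support.2 hy))
  have hg : g = c * ρ := by rw [← hρc.commute.eq]; simp [ρ]
  have hcx : c x = x := by
    rw [cycleOf_apply, if_neg]
    exact fun h ↦ hy ((h.apply_eq_self_iff).2 hx)
  have hρx : ρ x = x := by rw [mul_apply, inv_eq_iff_eq.2 hcx.symm, hx]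
  have hρy : ρ y = y := (hρc y).resolve_right (by simpa [c] using hy)
  obtain ⟨l, hl⟩ := toList_eq_cons hy
  have hnodup : (x :: toList g y).Nodup := by
    refine List.nodup_cons.2 ⟨fun h ↦ ?_, nodup_toList g y⟩
    exact hy (((mem_toList_iff.1 h).1.symm.apply_eq_self_iff).1 hx)
  have hlen : 2 ≤ (x :: toList g y).length := by
    have := two_le_length_toList_iff_mem_support.2 (mem_support.2 hy); simp; omega
  have hθ : swap x y * c = (x :: toList g y).formPerm := by
    rw [hl, List.formPerm_cons_cons, ← hl, formPerm_toList]
  have hθρ : (swap x y * c).Disjoint ρ := fun z ↦ by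
    by_cases hz : ρ z = z
    · exact .inr hz
    · refine .inl ?_
      rw [mul_apply, (hρc z).resolve_left hz, swap_apply_of_ne_of_ne] <;> rintro rfl <;> simp_all
  refine ⟨ρ.cycleType, ?_, ?_⟩
  · rw [hg, hρc.symm.cycleType_mul, (isCycle_cycleOf g hy).cycleType]; rfl
  · rw [hg, ← mul_assoc, hθρ.cycleType_mul, hθ, (List.isCycle_formPerm hnodup hlen).cycleType,
      List.support_formPerm_of_nodup _ hnodup (by simpa using hy),
      List.toFinset_card_of_nodup hnodup, List.length_cons, length_toList]
    rfl

theorem fixedPointCount_eq_card_sub_sum_cycleType (σ : Perm α) :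
    fixedPointCount σ = Fintype.card α - σ.cycleType.sum := by
  rw [sum_cycleType, ← card_compl, fixedPointCount]
  congr 1
  ext x
  simp

variable {n : ℕ}

theorem extendDomain_finSuccAboveEquiv_zero_apply_succ (τ : Perm (Fin n)) (x : Fin n) :
    τ.extendDomain (finSuccAboveEquiv 0) x.succ = (τ x).succ := by
  simpa [finSuccAboveEquiv_apply] using extendDomain_apply_image τ (finSuccAboveEquiv 0) x

theorem decomposeFin_symm_eq_swap_mul (p : Fin (n + 1)) (τ : Perm (Fin n)) :
    decomposeFin.symm (p, τ) = swap 0 p * τ.extendDomain (finSuccAboveEquiv 0) := by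
  ext x
  refine Fin.cases ?_ (fun y ↦ ?_) x
  · simp [extendDomain_apply_not_subtype]
  · simp [extendDomain_finSuccAboveEquiv_zero_apply_succ]

theorem cycleType_decomposeFin_symm_zero (τ : Perm (Fin n)) :
    (decomposeFin.symm (0, τ)).cycleType = τ.cycleType := by
  rw [decomposeFin_symm_eq_swap_mul, swap_self, ← Perm.one_def, one_mul, cycleType_extendDomain]

theorem cycleType_decomposeFin_symm_succ_of_apply_eq_self {τ : Perm (Fin n)} {x : Fin n}
    (hx : τ x = x) : (decomposeFin.symm (x.succ, τ)).cycleType = 2 ::ₘ τ.cycleType := by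
  rw [decomposeFin_symm_eq_swap_mul, cycleType_swap_mul_of_apply_eq_self, cycleType_extendDomain]
  · simp [extendDomain_apply_not_subtype]
  · simp [extendDomain_finSuccAboveEquiv_zero_apply_succ, hx]
  · exact (Fin.succ_ne_zero x).symm

theorem cycleType_decomposeFin_symm_succ_of_apply_ne_self {τ : Perm (Fin n)} {x : Fin n}
    (hx : τ x ≠ x) : ∃ k s, τ.cycleType = k ::ₘ s ∧
      (decomposeFin.symm (x.succ, τ)).cycleType = (k + 1) ::ₘ s := by
  obtain ⟨s, hs, hs'⟩ := cycleType_swap_mul_of_apply_ne_self (x := 0) (y := x.succ)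
    (g := τ.extendDomain (finSuccAboveEquiv (0 : Fin (n + 1))))
    (by simp [extendDomain_apply_not_subtype])
    (by simpa [extendDomain_finSuccAboveEquiv_zero_apply_succ] using hx)
  rw [cycleType_extendDomain] at hs
  exact ⟨_, s, hs, by rwa [decomposeFin_symm_eq_swap_mul]⟩

theorem sum_fixedPointCount_smul {M : Type*} [AddCommMonoid M] (f : Perm α → M)
    (hf : ∀ σ τ : Perm α, f (τ * σ * τ⁻¹) = f σ) (x₀ : α) :
    ∑ σ, fixedPointCount σ • f σ = Fintype.card α • ∑ σ with σ x₀ = x₀, f σ := by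
  calc ∑ σ, fixedPointCount σ • f σ = ∑ σ, ∑ x with σ x = x, f σ := by
        simp [fixedPointCount]
    _ = ∑ x, ∑ σ with σ x = x, f σ := by
        simp_rw [sum_filter]; exact sum_comm
    _ = ∑ x : α, ∑ σ with σ x₀ = x₀, f σ := sum_congr rfl fun x _ ↦ by
        refine sum_equiv (MulAut.conj (swap x₀ x)).toEquiv (fun σ ↦ ?_)
          (fun σ _ ↦ (hf σ _).symm)
        simp [swap_apply_eq_iff]
    _ = Fintype.card α • ∑ σ with σ x₀ = x₀, f σ := by simp

end Equiv.Perm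

section CycleWeight

variable {R : Type*} [CommRing R] (a m : R) {α : Type*} [DecidableEq α] [Fintype α] {n : ℕ}

-- `σ.cycleType` lists only the cycles of length `≥ 2`.
def cycleWeight (σ : Perm α) : R := a ^ fixedPointCount σ * m ^ Multiset.card σ.cycleType

-- The weight of `σ` with one fixed point deleted, so that
-- `∑ σ, fixedPointCount σ * reducedCycleWeight a m σ` is the `a`-derivative of `cycleWeightSum`.
def reducedCycleWeight (σ : Perm α) : R :=
  a ^ (fixedPointCount σ - 1) * m ^ Multiset.card σ.cycleType

def cycleWeightSum (n : ℕ) : R := ∑ σ : Perm (Fin n), cycleWeight a m σ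

theorem fixedPointCount_mul_cycleWeight (σ : Perm α) :
    fixedPointCount σ * cycleWeight a m σ =
      a * (fixedPointCount σ * reducedCycleWeight a m σ) := by
  rcases Nat.eq_zero_or_eq_succ_pred (fixedPointCount σ) with h | h
  · simp [h]
  · rw [cycleWeight, reducedCycleWeight, h, Nat.succ_sub_one, pow_succ]
    ring

theorem cycleWeight_decomposeFin_symm_zero (τ : Perm (Fin n)) :
    cycleWeight a m (decomposeFin.symm (0, τ)) = a * cycleWeight a m τ := by
  have := sum_cycleType_le τ
  simp only [cycleWeight, fixedPointCount_eq_card_sub_sum_cycleType,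
    cycleType_decomposeFin_symm_zero, Fintype.card_fin] at this ⊢
  rw [show n + 1 - τ.cycleType.sum = n - τ.cycleType.sum + 1 by omega, pow_succ]
  ring

theorem reducedCycleWeight_decomposeFin_symm_zero (τ : Perm (Fin n)) :
    reducedCycleWeight a m (decomposeFin.symm (0, τ)) = cycleWeight a m τ := by
  have := sum_cycleType_le τ
  simp only [cycleWeight, reducedCycleWeight, fixedPointCount_eq_card_sub_sum_cycleType,
    cycleType_decomposeFin_symm_zero, Fintype.card_fin] at this ⊢
  rw [show n + 1 - τ.cycleType.sum - 1 = n - τ.cycleType.sum by omega]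

theorem cycleWeight_decomposeFin_symm_succ_of_apply_eq_self {τ : Perm (Fin n)} {x : Fin n}
    (hx : τ x = x) :
    cycleWeight a m (decomposeFin.symm (x.succ, τ)) = m * reducedCycleWeight a m τ := by
  simp only [cycleWeight, reducedCycleWeight, fixedPointCount_eq_card_sub_sum_cycleType,
    cycleType_decomposeFin_symm_succ_of_apply_eq_self hx, Fintype.card_fin, Multiset.sum_cons,
    Multiset.card_cons]
  rw [show n + 1 - (2 + τ.cycleType.sum) = n - τ.cycleType.sum - 1 by omega, pow_succ]
  ring

theorem cycleWeight_decomposeFin_symm_succ_of_apply_ne_self {τ : Perm (Fin n)} {x : Fin n}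
    (hx : τ x ≠ x) : cycleWeight a m (decomposeFin.symm (x.succ, τ)) = cycleWeight a m τ := by
  obtain ⟨k, s, hτ, hσ⟩ := cycleType_decomposeFin_symm_succ_of_apply_ne_self hx
  simp only [cycleWeight, fixedPointCount_eq_card_sub_sum_cycleType, hτ, hσ, Fintype.card_fin,
    Multiset.sum_cons, Multiset.card_cons]
  rw [show n + 1 - (k + 1 + s.sum) = n - (k + s.sum) by omega]

theorem sum_cycleWeight_decomposeFin_symm (τ : Perm (Fin n)) :
    ∑ p, cycleWeight a m (decomposeFin.symm (p, τ)) =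
      (a + n) * cycleWeight a m τ + (m - a) * (fixedPointCount τ * reducedCycleWeight a m τ) := by
  rw [Fin.sum_univ_succ, cycleWeight_decomposeFin_symm_zero,
    ← sum_filter_add_sum_filter_not univ (fun x ↦ τ x = x),
    sum_congr rfl fun x hx ↦
      cycleWeight_decomposeFin_symm_succ_of_apply_eq_self a m (mem_filter.1 hx).2,
    sum_congr rfl fun x hx ↦
      cycleWeight_decomposeFin_symm_succ_of_apply_ne_self a m (mem_filter.1 hx).2,
    sum_const, sum_const, nsmul_eq_mul, nsmul_eq_mul]
  have hcard : (n : R) = fixedPointCount τ + #{x | τ x ≠ x} := by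
    rw [← Nat.cast_add, fixedPointCount]
    congr 1
    convert (card_filter_add_card_filter_not (s := univ) (fun x ↦ τ x = x)).symm
    simp
  rw [show #{x | τ x = x} = fixedPointCount τ from rfl]
  linear_combination -fixedPointCount_mul_cycleWeight a m τ - cycleWeight a m τ * hcard

theorem cycleWeightSum_succ :
    cycleWeightSum a m (n + 1) = (a + n) * cycleWeightSum a m n +
      (m - a) * ∑ τ : Perm (Fin n), fixedPointCount τ * reducedCycleWeight a m τ := by
  rw [cycleWeightSum, ← decomposeFin.symm.sum_comp, Fintype.sum_prod_type, sum_comm]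
  simp only [sum_cycleWeight_decomposeFin_symm, sum_add_distrib, ← mul_sum]
  rfl

theorem sum_fixedPointCount_mul_reducedCycleWeight :
    ∑ σ : Perm (Fin (n + 1)), fixedPointCount σ * reducedCycleWeight a m σ =
      (n + 1) * cycleWeightSum a m n := by
  have hconj (σ τ : Perm (Fin (n + 1))) :
      reducedCycleWeight a m (τ * σ * τ⁻¹) = reducedCycleWeight a m σ := by
    simp only [reducedCycleWeight, fixedPointCount_eq_card_sub_sum_cycleType, cycleType_conj]
  simp_rw [← nsmul_eq_mul]
  rw [sum_fixedPointCount_smul _ hconj 0, sum_filter, ← decomposeFin.symm.sum_comp,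
    Fintype.sum_prod_type, Fin.sum_univ_succ]
  simp [Fin.succ_ne_zero, reducedCycleWeight_decomposeFin_symm_zero, cycleWeightSum]

theorem cycleWeightSum_add_two :
    cycleWeightSum a m (n + 2) = (a + n + 1) * cycleWeightSum a m (n + 1) +
      (m - a) * (n + 1) * cycleWeightSum a m n := by
  rw [cycleWeightSum_succ, sum_fixedPointCount_mul_reducedCycleWeight]
  push_cast
  ring

theorem cycleWeightSum_zero : cycleWeightSum a m 0 = 1 := by
  simp [cycleWeightSum, cycleWeight, fixedPointCount]

theorem cycleWeightSum_one : cycleWeightSum a m 1 = a := by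
  simp [cycleWeightSum, cycleWeight, fixedPointCount]

end CycleWeight

theorem Multiset.prod_map_mul_pow {M : Type*} [CommMonoid M] (m b : M) (s : Multiset ℕ) :
    (s.map fun ℓ ↦ m * b ^ ℓ).prod = m ^ Multiset.card s * b ^ s.sum := by
  induction s using Multiset.induction_on with
  | empty => simp
  | cons ℓ s ih =>
    rw [Multiset.map_cons, Multiset.prod_cons, ih, Multiset.card_cons, Multiset.sum_cons, pow_succ,
      pow_add, mul_mul_mul_comm, mul_comm m]

theorem prod_Icc_pow_count_cycleType {M : Type*} [CommMonoid M] (m b : M) {n : ℕ}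
    (σ : Perm (Fin n)) :
    ∏ ℓ ∈ Icc 2 n, (m * b ^ ℓ) ^ σ.cycleType.count ℓ =
      m ^ Multiset.card σ.cycleType * b ^ σ.cycleType.sum := by
  rw [← Multiset.prod_map_mul_pow, prod_multiset_map_count]
  refine (prod_subset (fun ℓ hℓ ↦ ?_) fun ℓ _ hℓ ↦ ?_).symm
  · rw [Multiset.mem_toFinset] at hℓ
    refine mem_Icc.2 ⟨two_le_of_mem_cycleType hℓ, ?_⟩
    simpa using (Multiset.le_sum_of_mem hℓ).trans (sum_cycleType_le σ)
  · rw [Multiset.count_eq_zero.2 (by simpa using hℓ), pow_zero]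

theorem Psi_eq_factorial_mul_pow_mul_cycleWeightSum (a : ℝ) {b : ℝ} (hb : b ≠ 0) (m : ℝ) (n : ℕ) :
    Psi a b m n = n ! * (b ^ n * cycleWeightSum (a / b) m n) := by
  unfold Psi cycleWeightSum
  congr 1
  rw [mul_sum]
  refine sum_congr rfl fun σ _ ↦ ?_
  have hfix := fixedPointCount_eq_card_sub_sum_cycleType σ
  have hle := sum_cycleType_le σ
  rw [Fintype.card_fin] at hfix hle
  have hbn : b ^ n = b ^ fixedPointCount σ * b ^ σ.cycleType.sum := by
    rw [← pow_add]; congr 1; omega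
  rw [prod_Icc_pow_count_cycleType, cycleWeight, div_pow, hbn]
  field_simp

section ClosedForm

open PowerSeries

variable {K : Type*} [Field K] [CharZero K]

-- The coefficient of `X ^ k` in `(1 - X) ^ (-m)`.
noncomputable def negBinomCoeff (m : K) (k : ℕ) : K := (∏ i ∈ range k, (m + i)) / k !

-- The coefficient of `X ^ n` in `exp (c X) * (1 - X) ^ (-m)`.
noncomputable def expNegBinomCoeff (c m : K) (n : ℕ) : K :=
  ∑ p ∈ antidiagonal n, c ^ p.1 / p.1 ! * negBinomCoeff m p.2

theorem derivative_mk_pow_div_factorial (c : K) :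
    d⁄dX K (PowerSeries.mk fun i ↦ c ^ i / i !) = C c * PowerSeries.mk fun i ↦ c ^ i / i ! := by
  ext i
  rw [coeff_derivative, coeff_C_mul, coeff_mk, coeff_mk, Nat.factorial_succ]
  push_cast
  field_simp
  ring

theorem one_sub_X_mul_derivative_mk_negBinomCoeff (m : K) :
    (1 - X : K⟦X⟧) * d⁄dX K (PowerSeries.mk (negBinomCoeff m)) =
      C m * PowerSeries.mk (negBinomCoeff m) := by
  have hrec (k : ℕ) : negBinomCoeff m (k + 1) * (k + 1) = (m + k) * negBinomCoeff m k := by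
    rw [negBinomCoeff, negBinomCoeff, prod_range_succ, Nat.factorial_succ]
    push_cast
    field_simp
  ext k
  rcases k with _ | k
  · simp only [sub_mul, one_mul, map_sub, coeff_zero_X_mul, coeff_derivative, coeff_C_mul, coeff_mk]
    simpa using hrec 0
  · simp only [sub_mul, one_mul, map_sub, coeff_succ_X_mul, coeff_derivative, coeff_C_mul, coeff_mk]
    have := hrec (k + 1)
    push_cast at this ⊢
    linear_combination this

theorem one_sub_X_mul_derivative_mk_expNegBinomCoeff (a m : K) :
    (1 - X : K⟦X⟧) * d⁄dX K (PowerSeries.mk (expNegBinomCoeff (a - m) m)) =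
      (C a + C (m - a) * X) * PowerSeries.mk (expNegBinomCoeff (a - m) m) := by
  have hmul : mk (expNegBinomCoeff (a - m) m) =
      (PowerSeries.mk fun i ↦ (a - m) ^ i / i !) * PowerSeries.mk (negBinomCoeff m) := by
    ext n; simp [expNegBinomCoeff, coeff_mul]
  rw [hmul, Derivation.leibniz, smul_eq_mul, smul_eq_mul, mul_add, ← mul_assoc, ← mul_assoc,
    mul_comm (1 - X : K⟦X⟧), mul_assoc _ (1 - X : K⟦X⟧), one_sub_X_mul_derivative_mk_negBinomCoeff,
    derivative_mk_pow_div_factorial, map_sub, map_sub]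
  ring

theorem expNegBinomCoeff_zero (c m : K) : expNegBinomCoeff c m 0 = 1 := by
  simp [expNegBinomCoeff, negBinomCoeff]

theorem expNegBinomCoeff_one (a m : K) :
    expNegBinomCoeff (a - m) m 1 = a * expNegBinomCoeff (a - m) m 0 := by
  have h := congrArg (coeff 0) (one_sub_X_mul_derivative_mk_expNegBinomCoeff a m)
  simp only [sub_mul, add_mul, one_mul, map_sub, map_add, coeff_zero_X_mul, coeff_derivative,
    coeff_C_mul, mul_assoc, coeff_mk] at h
  simpa using h

theorem expNegBinomCoeff_add_two (a m : K) (n : ℕ) :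
    (n + 2) * expNegBinomCoeff (a - m) m (n + 2) =
      (a + n + 1) * expNegBinomCoeff (a - m) m (n + 1) +
        (m - a) * expNegBinomCoeff (a - m) m n := by
  have h := congrArg (coeff (n + 1)) (one_sub_X_mul_derivative_mk_expNegBinomCoeff a m)
  simp only [sub_mul, add_mul, one_mul, map_sub, map_add, coeff_succ_X_mul, coeff_derivative,
    coeff_C_mul, mul_assoc, coeff_mk] at h
  push_cast at h
  linear_combination h

theorem cycleWeightSum_eq_factorial_mul_expNegBinomCoeff (a m : K) (n : ℕ) :
    cycleWeightSum a m n = n ! * expNegBinomCoeff (a - m) m n := by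
  induction n using Nat.twoStepInduction with
  | zero => simp [cycleWeightSum_zero, expNegBinomCoeff_zero]
  | one => simp [cycleWeightSum_one, expNegBinomCoeff_one, expNegBinomCoeff_zero]
  | more n ih₀ ih₁ =>
    have hfac : ((n + 2)! : K) = (n + 2) * (n + 1) * n ! := by
      push_cast [Nat.factorial_succ]; ring
    rw [cycleWeightSum_add_two, ih₀, ih₁, hfac, Nat.factorial_succ]
    push_cast
    linear_combination -(n + 1) * n ! * expNegBinomCoeff_add_two a m n

end ClosedForm

section Asymptotics

open Filter Real Topology

theorem tendsto_negBinomCoeff_mul_rpow {m : ℝ} (hm : ∀ k : ℕ, m ≠ -k) :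
    Tendsto (fun k : ℕ ↦ negBinomCoeff m k * (k : ℝ) ^ (1 - m)) atTop (𝓝 (Gamma m)⁻¹) := by
  have h := (tendsto_natCast_div_add_atTop m).mul
    ((GammaSeq_tendsto_Gamma m).inv₀ (Gamma_ne_zero hm))
  rw [one_mul] at h
  refine h.congr' ?_
  filter_upwards [eventually_gt_atTop 0] with k hk
  have hk' : (0 : ℝ) < k := by exact_mod_cast hk
  have hmk : (k : ℝ) + m ≠ 0 := fun h ↦ hm k (by linarith)
  have hprod : ∏ i ∈ range k, (m + i) ≠ 0 :=
    prod_ne_zero_iff.2 fun i _ h ↦ hm i (by linarith)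
  rw [GammaSeq, negBinomCoeff, prod_range_succ, rpow_sub hk', rpow_one]
  field_simp
  ring

theorem rpow_le_exp_abs_pow {x s : ℝ} {i : ℕ} (h₁ : 1 ≤ x) (h₂ : x ≤ i + 1) :
    x ^ s ≤ exp |s| ^ i := calc
  x ^ s ≤ x ^ |s| := rpow_le_rpow_of_exponent_le h₁ (le_abs_self s)
  _ ≤ exp i ^ |s| := rpow_le_rpow (by linarith) (h₂.trans (add_one_le_exp _)) (abs_nonneg s)
  _ = exp |s| ^ i := by rw [← exp_mul, ← exp_nat_mul, mul_comm]

theorem Filter.Tendsto.apply_sub_mul_rpow {A : ℕ → ℝ} {s L : ℝ}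
    (hA : Tendsto (fun k : ℕ ↦ A k * (k : ℝ) ^ s) atTop (𝓝 L)) (i : ℕ) :
    Tendsto (fun n : ℕ ↦ A (n - i) * (n : ℝ) ^ s) atTop (𝓝 L) := by
  have hratio : Tendsto (fun k : ℕ ↦ (1 + (i : ℝ) / k) ^ s) atTop (𝓝 1) := by
    have := ((tendsto_const_div_atTop_nhds_zero_nat (i : ℝ)).const_add 1).rpow_const
      (p := s) (.inl (by norm_num))
    simpa using this
  have h := (hA.mul hratio).comp (tendsto_sub_atTop_nat i)
  rw [mul_one] at h
  refine h.congr' ?_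
  filter_upwards [eventually_gt_atTop i] with n hn
  have hpos : (0 : ℝ) < (n - i : ℕ) := by exact_mod_cast Nat.sub_pos_of_lt hn
  simp only [Function.comp_apply]
  rw [mul_assoc, ← mul_rpow hpos.le (by positivity), mul_add, mul_one, mul_div_cancel₀ _ hpos.ne',
    Nat.cast_sub hn.le, sub_add_cancel]

theorem abs_mul_rpow_le_of_bound {A : ℕ → ℝ} {s C : ℝ}
    (hC : ∀ k : ℕ, |A k| * max (k : ℝ) 1 ^ s ≤ C) {n i : ℕ} (hn : 1 ≤ n) (hi : i ≤ n) :
    |A (n - i)| * (n : ℝ) ^ s ≤ C * exp |s| ^ i := by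
  set M := max ((n - i : ℕ) : ℝ) 1
  have hM : 1 ≤ M := le_max_right _ _
  have hMn : M ≤ n := max_le (by exact_mod_cast Nat.sub_le n i) (by exact_mod_cast hn)
  have hnM : (n : ℝ) ≤ (i + 1) * M := by
    have : (n : ℝ) = i + (n - i : ℕ) := by rw [Nat.cast_sub hi]; ring
    nlinarith [le_max_left ((n - i : ℕ) : ℝ) 1]
  have hsplit : (n : ℝ) ^ s = M ^ s * (n / M) ^ s := by
    rw [← mul_rpow (by positivity) (by positivity), mul_div_cancel₀ _ (by positivity)]
  have hratio : (n / M) ^ s ≤ exp |s| ^ i :=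
    rpow_le_exp_abs_pow ((one_le_div (by positivity)).2 hMn) ((div_le_iff₀ (by positivity)).2 hnM)
  rw [hsplit, ← mul_assoc]
  exact mul_le_mul (hC _) hratio (by positivity)
    ((by positivity : (0 : ℝ) ≤ |A (n - i)| * M ^ s).trans (hC _))

theorem tendsto_sum_antidiagonal_pow_div_factorial_mul_rpow {A : ℕ → ℝ} {s L : ℝ} (c : ℝ)
    (hA : Tendsto (fun k : ℕ ↦ A k * (k : ℝ) ^ s) atTop (𝓝 L)) :
    Tendsto (fun n : ℕ ↦ (∑ p ∈ antidiagonal n, c ^ p.1 / p.1 ! * A p.2) * (n : ℝ) ^ s) atTop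
      (𝓝 (exp c * L)) := by
  obtain ⟨C, hC⟩ : ∃ C, ∀ k : ℕ, |A k| * max (k : ℝ) 1 ^ s ≤ C := by
    have hA' : Tendsto (fun k : ℕ ↦ A k * max (k : ℝ) 1 ^ s) atTop (𝓝 L) := hA.congr' <| by
      filter_upwards [eventually_ge_atTop 1] with k hk
      rw [max_eq_left (by exact_mod_cast hk)]
    obtain ⟨C, hC⟩ := hA'.abs.bddAbove_range
    refine ⟨C, fun k ↦ ?_⟩
    simpa [abs_mul, abs_of_pos (rpow_pos_of_pos (lt_max_of_lt_right one_pos) s)] using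
      hC ⟨k, rfl⟩
  have hC₀ : 0 ≤ C := (by positivity : (0 : ℝ) ≤ |A 0| * max ((0 : ℕ) : ℝ) 1 ^ s).trans (hC 0)
  set f : ℕ → ℕ → ℝ := fun n i ↦ if i ≤ n then c ^ i / i ! * (A (n - i) * (n : ℝ) ^ s) else 0
  have hsum (n : ℕ) :
      (∑ p ∈ antidiagonal n, c ^ p.1 / p.1 ! * A p.2) * (n : ℝ) ^ s = ∑' i, f n i := by
    rw [Nat.sum_antidiagonal_eq_sum_range_succ_mk, sum_mul, tsum_eq_sum (s := range (n + 1))]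
    · exact sum_congr rfl fun i hi ↦ by
        simp [f, Nat.lt_succ_iff.1 (mem_range.1 hi), mul_assoc]
    · intro i hi
      simp [f, Nat.lt_succ_iff.not.1 (mt mem_range.2 hi)]
  have hlim (i : ℕ) : Tendsto (f · i) atTop (𝓝 (c ^ i / i ! * L)) :=
    ((hA.apply_sub_mul_rpow i).const_mul _).congr' <| by
      filter_upwards [eventually_ge_atTop i] with n hn
      simp [f, hn]
  have hbound : ∀ᶠ n in atTop, ∀ i, ‖f n i‖ ≤ C * ((|c| * exp |s|) ^ i / i !) := by
    filter_upwards [eventually_ge_atTop 1] with n hn i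
    by_cases hi : i ≤ n
    · have := abs_mul_rpow_le_of_bound hC hn hi
      simp only [f, if_pos hi, norm_mul, norm_div, norm_pow, Real.norm_eq_abs, Nat.abs_cast,
        abs_of_nonneg (rpow_nonneg (Nat.cast_nonneg n) s)]
      calc |c| ^ i / i ! * (|A (n - i)| * (n : ℝ) ^ s) ≤ |c| ^ i / i ! * (C * exp |s| ^ i) := by
            gcongr
        _ = C * ((|c| * exp |s|) ^ i / i !) := by ring
    · simp only [f, if_neg hi, norm_zero]
      positivity
  have h := tendsto_tsum_of_dominated_convergence ((summable_pow_div_factorial _).mul_left C)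
    hlim hbound
  have hexp : HasSum (fun i : ℕ ↦ c ^ i / i !) (exp c) := by
    rw [exp_eq_exp_ℝ]; exact NormedSpace.expSeries_div_hasSum_exp c
  rw [tsum_mul_right, hexp.tsum_eq] at h
  simpa only [hsum] using h

end Asymptotics

/-- `Ψ_n(a,b,m) ~ (n!)² bⁿ e^{a/b − m} n^{m−1} / Γ(m)` as `n → ∞`,
for `b > 0` and `m` not a nonpositive integer. -/
theorem Psi_asymptotics (a : ℝ) (b : ℝ) (hb : 0 < b) (m : ℝ)
    (hm : ∀ k : ℕ, m ≠ -(k : ℝ)) :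
    Filter.Tendsto
      (fun n : ℕ =>
        Psi a b m n / (((n.factorial : ℝ)) ^ 2 * b ^ n * (n : ℝ) ^ (m - 1)))
      Filter.atTop (nhds (Real.exp (a / b - m) / Real.Gamma m)) := by
  have h := tendsto_sum_antidiagonal_pow_div_factorial_mul_rpow (a / b - m)
    (tendsto_negBinomCoeff_mul_rpow hm)
  rw [div_eq_mul_inv]
  refine h.congr' ?_
  filter_upwards [Filter.eventually_gt_atTop 0] with n hn
  have hn' : (0 : ℝ) < n := by exact_mod_cast hn
  rw [Psi_eq_factorial_mul_pow_mul_cycleWeightSum a hb.ne',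
    cycleWeightSum_eq_factorial_mul_expNegBinomCoeff, show 1 - m = -(m - 1) by ring,
    Real.rpow_neg hn'.le, expNegBinomCoeff]
  field_simp
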